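/- arXiv:math/9912088 — 3 statements merged into one kernel-verified Lean document; each statement's English description precedes it below -/
import Mathlib

section
/- Let A be a finitely generated abelian group and let ℂ[A] be its group algebra over ℂ. Then the map sending a group homomorphism α : A → ℂˣ to the kernel of its ℂ-algebra extension α' : ℂ[A] → ℂ is a bijection from Hom(A, ℂˣ) to the set of maximal ideals of ℂ[A]. -/
/-! Characters `A →* ℂˣ` correspond exactly to `ℂ`-algebra maps `ℂ[A] →ₐ[ℂ] ℂ`, and a character
`φ : R →ₐ[k] k` is recovered from its kernel since `x - φ x ∈ ker φ`. Conversely, `ℂ[A]` is a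
finitely generated `ℂ`-algebra, so by the weak Nullstellensatz every maximal ideal has residue
field `ℂ` and is therefore the kernel of a character. -/

namespace AlgHom

variable {k R : Type*} [Field k] [Ring R] [Algebra k R]

theorem ker_isMaximal (φ : R →ₐ[k] k) : (RingHom.ker φ).IsMaximal :=
  RingHom.ker_isMaximal_of_surjective φ fun c => ⟨algebraMap k R c, φ.commutes c⟩

theorem ker_injective : Function.Injective fun φ : R →ₐ[k] k => RingHom.ker φ := by
  intro φ ψ h
  ext x
  have hx : x - algebraMap k R (ψ x) ∈ RingHom.ker φ := by
    rw [show RingHom.ker φ = RingHom.ker ψ from h, RingHom.mem_ker]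
    simp
  simpa [sub_eq_zero] using hx

end AlgHom

theorem Ideal.IsMaximal.exists_algHom_ker_eq {k R : Type*} [Field k] [IsAlgClosed k] [CommRing R]
    [Algebra k R] [Algebra.FiniteType k R] {I : Ideal R} (hI : I.IsMaximal) :
    ∃ φ : R →ₐ[k] k, RingHom.ker φ = I := by
  let := Ideal.Quotient.field I
  -- Zariski's lemma: the residue field is finite over `k`, hence embeds into `k`.
  have : Module.Finite k (R ⧸ I) := finite_of_finite_type_of_isJacobsonRing k _
  refine ⟨(IsAlgClosed.lift : (R ⧸ I) →ₐ[k] k).comp (Ideal.Quotient.mkₐ k I), ?_⟩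
  ext x
  simp [RingHom.mem_ker, Ideal.Quotient.eq_zero_iff_mem]

theorem AlgHom.range_ker_eq_setOf_isMaximal {k R : Type*} [Field k] [IsAlgClosed k] [CommRing R]
    [Algebra k R] [Algebra.FiniteType k R] :
    Set.range (fun φ : R →ₐ[k] k => RingHom.ker φ) = {I : Ideal R | I.IsMaximal} :=
  Set.ext fun _ => ⟨by rintro ⟨φ, rfl⟩; exact φ.ker_isMaximal, fun hI => hI.exists_algHom_ker_eq⟩

theorem MonoidAlgebra.bijective_lift_comp_coeHom (k G : Type*) [CommSemiring k] [Group G] :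
    Function.Bijective fun α : G →* kˣ => lift k k G ((Units.coeHom k).comp α) :=
  (lift k k G).bijective.comp MonoidHom.toHomUnitsMulEquiv.symm.bijective

/-- For a finitely generated abelian group `A`, the map sending a group homomorphism
`α : A → ℂˣ` to the kernel of its `ℂ`-algebra extension `α' : ℂ[A] → ℂ` is a bijection
from `Hom(A, ℂˣ)` onto the set of maximal ideals of the group algebra `ℂ[A]`. -/
theorem stmt_1 (A : Type*) [CommGroup A] [Group.FG A] :
    Function.Injective
      (fun α : A →* ℂˣ =>
        RingHom.ker ((MonoidAlgebra.lift ℂ ℂ A ((Units.coeHom ℂ).comp α)) :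
          MonoidAlgebra ℂ A →ₐ[ℂ] ℂ).toRingHom) ∧
    Set.range
      (fun α : A →* ℂˣ =>
        RingHom.ker ((MonoidAlgebra.lift ℂ ℂ A ((Units.coeHom ℂ).comp α)) :
          MonoidAlgebra ℂ A →ₐ[ℂ] ℂ).toRingHom)
      = {I : Ideal (MonoidAlgebra ℂ A) | I.IsMaximal} := by
  have hchar := MonoidAlgebra.bijective_lift_comp_coeHom ℂ A
  refine ⟨AlgHom.ker_injective.comp hchar.injective, ?_⟩
  rw [← AlgHom.range_ker_eq_setOf_isMaximal (k := ℂ), ← hchar.surjective.range_comp]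
  rfl
end

section
/- Let A → B and B → C be ring homomorphisms such that the composite A → C is flat and B → C is faithfully flat. Then A → B is flat. -/
/-!
Let `f : N → P` be an injective `A`-linear map. Under the canonical identification
`C ⊗[B] (B ⊗[A] -) ≅ C ⊗[A] -`, the map `C ⊗[B] (B ⊗[A] f)` becomes `C ⊗[A] f`, which is
injective because `C` is `A`-flat. Faithful flatness of `C` over `B` then reflects this
injectivity back to `B ⊗[A] f`.
-/

open TensorProduct

namespace LinearMap

variable {A B C N P : Type*} [CommRing A] [CommRing B] [CommRing C]
  [Algebra A B] [Algebra B C] [Algebra A C] [IsScalarTower A B C]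
  [AddCommGroup N] [Module A N] [AddCommGroup P] [Module A P]

theorem cancelBaseChange_comp_baseChange_baseChange (f : N →ₗ[A] P) :
    (AlgebraTensorModule.cancelBaseChange A B C C P).toLinearMap ∘ₗ
        (f.baseChange B).baseChange C =
      f.baseChange C ∘ₗ (AlgebraTensorModule.cancelBaseChange A B C C N).toLinearMap := by
  ext
  simp

end LinearMap

/-- If `A → B → C` are ring maps with `A → C` flat and `B → C` faithfully flat,
then `A → B` is flat. -/
theorem stmt_6 (A B C : Type*) [CommRing A] [CommRing B] [CommRing C]
    [Algebra A B] [Algebra B C] [Algebra A C] [IsScalarTower A B C]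
    [Module.Flat A C] [Module.FaithfullyFlat B C] :
    Module.Flat A B := by
  rw [Module.Flat.iff_lTensor_preserves_injective_linearMap]
  intro N P _ _ _ _ f hf
  have hC : Function.Injective (f.baseChange C) :=
    Module.Flat.lTensor_preserves_injective_linearMap f hf
  have hCB : Function.Injective ((f.baseChange B).baseChange C) := by
    refine Function.Injective.of_comp (f := AlgebraTensorModule.cancelBaseChange A B C C P) ?_
    rw [← LinearEquiv.coe_coe, ← LinearMap.coe_comp,
      LinearMap.cancelBaseChange_comp_baseChange_baseChange, LinearMap.coe_comp]
    exact hC.comp (AlgebraTensorModule.cancelBaseChange A B C C N).injective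
  rw [← LinearMap.baseChange_eq_ltensor]
  exact (Module.FaithfullyFlat.lTensor_injective_iff_injective B C _).mp hCB
end

section
/- If 0 → A⁰ → A¹ → ... → Aᵐ → 0 is an exact sequence of flat R-modules, then for any R-module M the sequence 0 → M⊗_R A⁰ → M⊗_R A¹ → ... → M⊗_R Aᵐ → 0 is exact. -/
open Function LinearMap TensorProduct

section Helpers

variable {R : Type*} [CommRing R]

/-- If `f` has a linear left inverse, then `lTensor M f` is injective. -/
lemma aux_lTensor_injective_of_comp_eq_id {M A B : Type*}
    [AddCommGroup M] [Module R M] [AddCommGroup A] [Module R A] [AddCommGroup B] [Module R B]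
    (f : A →ₗ[R] B) (g : B →ₗ[R] A) (h : g.comp f = LinearMap.id) :
    Function.Injective (LinearMap.lTensor M f) := by
  have h2 : (LinearMap.lTensor M g).comp (LinearMap.lTensor M f) = LinearMap.id := by
    rw [← LinearMap.lTensor_comp, h, LinearMap.lTensor_id]
  exact Function.LeftInverse.injective (g := (LinearMap.lTensor M g))
    fun x => by simpa using DFunLike.congr_fun h2 x

/-- Adapter for `rTensor_exact` with explicit maps. -/
lemma aux_rTensor_exact {M N P : Type*} [AddCommGroup M] [Module R M]
    [AddCommGroup N] [Module R N] [AddCommGroup P] [Module R P]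
    (f : M →ₗ[R] N) (g : N →ₗ[R] P) (Q : Type*) [AddCommGroup Q] [Module R Q]
    (hfg : Function.Exact f g) (hg : Function.Surjective g) :
    Function.Exact (LinearMap.rTensor Q f) (LinearMap.rTensor Q g) :=
  rTensor_exact Q hfg hg

/-- Adapter for `lTensor_exact` with explicit maps. -/
lemma aux_lTensor_exact {M N P : Type*} [AddCommGroup M] [Module R M]
    [AddCommGroup N] [Module R N] [AddCommGroup P] [Module R P]
    (f : M →ₗ[R] N) (g : N →ₗ[R] P) (Q : Type*) [AddCommGroup Q] [Module R Q]
    (hfg : Function.Exact f g) (hg : Function.Surjective g) :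
    Function.Exact (LinearMap.lTensor Q f) (LinearMap.lTensor Q g) :=
  lTensor_exact Q hfg hg

/-- Purity, auxiliary version: given a surjection `p : F → M` with `F` flat,
if `0 → K → A → B → 0` is exact with `B` flat, then `M ⊗ K → M ⊗ A` is injective. -/
lemma aux_purity' {M F K A B : Type*} [AddCommGroup M] [Module R M]
    [AddCommGroup F] [Module R F] [Module.Flat R F]
    [AddCommGroup K] [Module R K] [AddCommGroup A] [Module R A]
    [AddCommGroup B] [Module R B] [Module.Flat R B]
    (p : F →ₗ[R] M) (hp : Function.Surjective p)
    (f : K →ₗ[R] A) (g : A →ₗ[R] B)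
    (hf : Function.Injective f) (hfg : Function.Exact f g)
    (hg : Function.Surjective g) :
    Function.Injective (LinearMap.lTensor M f) := by
  have hιp : Function.Exact (LinearMap.ker p).subtype p := LinearMap.exact_subtype_ker_map p
  rw [injective_iff_map_eq_zero]
  intro x hx
  obtain ⟨y, rfl⟩ := LinearMap.rTensor_surjective K hp x
  have h1 : LinearMap.rTensor A p (LinearMap.lTensor F f y) = 0 := by
    calc LinearMap.rTensor A p (LinearMap.lTensor F f y)
        = LinearMap.lTensor M f (LinearMap.rTensor K p y) := by
          rw [← LinearMap.comp_apply, LinearMap.rTensor_comp_lTensor,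
            ← LinearMap.lTensor_comp_rTensor, LinearMap.comp_apply]
      _ = 0 := hx
  obtain ⟨z, hz⟩ := (aux_rTensor_exact (LinearMap.ker p).subtype p A hιp hp
    (LinearMap.lTensor F f y)).mp h1
  have h2 : LinearMap.rTensor B (LinearMap.ker p).subtype
      (LinearMap.lTensor (LinearMap.ker p) g z) = 0 := by
    have hc : LinearMap.rTensor B (LinearMap.ker p).subtype
          (LinearMap.lTensor (LinearMap.ker p) g z)
        = LinearMap.lTensor F g (LinearMap.rTensor A (LinearMap.ker p).subtype z) := by
      rw [← LinearMap.comp_apply, LinearMap.rTensor_comp_lTensor,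
        ← LinearMap.lTensor_comp_rTensor, LinearMap.comp_apply]
    rw [hc, hz, ← LinearMap.comp_apply, ← LinearMap.lTensor_comp,
      hfg.linearMap_comp_eq_zero, LinearMap.lTensor_zero, LinearMap.zero_apply]
  have hz0 : LinearMap.lTensor (LinearMap.ker p) g z = 0 :=
    Module.Flat.rTensor_preserves_injective_linearMap (M := B) (LinearMap.ker p).subtype
      (Submodule.injective_subtype _) (by rw [h2, map_zero])
  obtain ⟨w, hw⟩ := (aux_lTensor_exact f g (LinearMap.ker p) hfg hg z).mp hz0
  have hyw : y = LinearMap.rTensor K (LinearMap.ker p).subtype w := by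
    apply Module.Flat.lTensor_preserves_injective_linearMap (M := F) f hf
    calc LinearMap.lTensor F f y = LinearMap.rTensor A (LinearMap.ker p).subtype z := hz.symm
      _ = LinearMap.rTensor A (LinearMap.ker p).subtype
            (LinearMap.lTensor (LinearMap.ker p) f w) := by rw [hw]
      _ = LinearMap.lTensor F f (LinearMap.rTensor K (LinearMap.ker p).subtype w) := by
          rw [← LinearMap.comp_apply, LinearMap.rTensor_comp_lTensor,
            ← LinearMap.lTensor_comp_rTensor, LinearMap.comp_apply]
  have hpι : p ∘ₗ (LinearMap.ker p).subtype = 0 := by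
    ext s
    simp [s.2]
  rw [hyw, ← LinearMap.comp_apply, ← LinearMap.rTensor_comp, hpι,
    LinearMap.rTensor_zero, LinearMap.zero_apply]

/-- Purity: if `0 → K → A → B → 0` is exact with `B` flat, then for any module `M`,
the map `M ⊗ K → M ⊗ A` is injective. -/
lemma aux_purity {M K A B : Type*} [AddCommGroup M] [Module R M]
    [AddCommGroup K] [Module R K] [AddCommGroup A] [Module R A]
    [AddCommGroup B] [Module R B] [Module.Flat R B]
    (f : K →ₗ[R] A) (g : A →ₗ[R] B)
    (hf : Function.Injective f) (hfg : Function.Exact f g)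
    (hg : Function.Surjective g) :
    Function.Injective (LinearMap.lTensor M f) :=
  aux_purity' (Finsupp.linearCombination R _root_.id)
    (Finsupp.linearCombination_id_surjective R M) f g hf hfg hg

/-- If `0 → K → A → B → 0` is exact with `A` and `B` flat, then `K` is flat. -/
lemma aux_flat_of_exact {K A B : Type*} [AddCommGroup K] [Module R K]
    [AddCommGroup A] [Module R A] [AddCommGroup B] [Module R B]
    [Module.Flat R A] [Module.Flat R B]
    (f : K →ₗ[R] A) (g : A →ₗ[R] B)
    (hf : Function.Injective f) (hfg : Function.Exact f g)
    (hg : Function.Surjective g) :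
    Module.Flat R K := by
  rw [Module.Flat.iff_rTensor_injective']
  intro I
  rw [injective_iff_map_eq_zero]
  intro x hx
  have h1 : LinearMap.rTensor A I.subtype (LinearMap.lTensor I f x) = 0 := by
    rw [← LinearMap.comp_apply, LinearMap.rTensor_comp_lTensor,
      ← LinearMap.lTensor_comp_rTensor, LinearMap.comp_apply, hx, map_zero]
  have h2 : LinearMap.lTensor I f x = 0 :=
    Module.Flat.rTensor_preserves_injective_linearMap (M := A) I.subtype
      (Submodule.injective_subtype I) (by rw [h1, map_zero])
  exact aux_purity f g hf hfg hg (by rw [h2, map_zero])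

end Helpers

/-- If `0 → A⁰ → A¹ → ... → Aᵐ → 0` is an exact sequence of flat `R`-modules, then tensoring
with any `R`-module `M` preserves exactness. -/
theorem stmt_9 (R : Type*) [CommRing R] (M : Type*) [AddCommGroup M] [Module R M]
    (m : ℕ) (hm : 1 ≤ m)
    (A : ℕ → Type*) [∀ i, AddCommGroup (A i)] [∀ i, Module R (A i)]
    [∀ i, Module.Flat R (A i)]
    (d : ∀ i, A i →ₗ[R] A (i + 1))
    (hinj : Function.Injective (d 0))
    (hexact : ∀ i, i + 2 ≤ m → Function.Exact (d i) (d (i + 1)))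
    (hsurj : Function.Surjective (d (m - 1))) :
    Function.Injective (LinearMap.lTensor M (d 0)) ∧
    (∀ i, i + 2 ≤ m →
      Function.Exact (LinearMap.lTensor M (d i)) (LinearMap.lTensor M (d (i + 1)))) ∧
    Function.Surjective (LinearMap.lTensor M (d (m - 1))) := by
  -- Flatness of the images `range (d i)`, by downward induction.
  have hrange_flat : ∀ j i, i + 1 + j = m → Module.Flat R (LinearMap.range (d i)) := by
    intro j
    induction j with
    | zero =>
      intro i hi
      have him : i = m - 1 := by omega
      subst him
      have htop : LinearMap.range (d (m - 1)) = ⊤ := LinearMap.range_eq_top.mpr hsurj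
      rw [htop]
      exact Module.Flat.of_linearEquiv (Submodule.topEquiv)
    | succ j ih =>
      intro i hi
      have hB : Module.Flat R (LinearMap.range (d (i + 1))) := ih (i + 1) (by omega)
      have hker : LinearMap.range (d i) = LinearMap.ker (d (i + 1)) :=
        ((hexact i (by omega)).linearMap_ker_eq).symm
      exact aux_flat_of_exact ((LinearMap.range (d i)).subtype) ((d (i + 1)).rangeRestrict)
        (Submodule.injective_subtype _)
        (by rw [LinearMap.exact_iff, LinearMap.ker_rangeRestrict, Submodule.range_subtype, hker])
        (LinearMap.surjective_rangeRestrict _)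
  -- The inclusions `range (d i) ↪ A (i+1)` stay injective after tensoring with `M`.
  have hsub_inj : ∀ i, i + 1 ≤ m →
      Function.Injective (LinearMap.lTensor M (LinearMap.range (d i)).subtype) := by
    intro i hi
    rcases lt_or_eq_of_le hi with h | h
    · have h2 : i + 2 ≤ m := by omega
      have hB : Module.Flat R (LinearMap.range (d (i + 1))) :=
        hrange_flat (m - (i + 2)) (i + 1) (by omega)
      have hker : LinearMap.range (d i) = LinearMap.ker (d (i + 1)) :=
        ((hexact i h2).linearMap_ker_eq).symm
      exact aux_purity _ ((d (i + 1)).rangeRestrict) (Submodule.injective_subtype _)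
        (by rw [LinearMap.exact_iff, LinearMap.ker_rangeRestrict, Submodule.range_subtype, hker])
        (LinearMap.surjective_rangeRestrict _)
    · have him : i = m - 1 := by omega
      subst him
      have htop : LinearMap.range (d (m - 1)) = ⊤ := LinearMap.range_eq_top.mpr hsurj
      rw [htop]
      exact aux_lTensor_injective_of_comp_eq_id _
        (LinearMap.codRestrict ⊤ LinearMap.id (fun _ => Submodule.mem_top))
        (by ext x; rfl)
  refine ⟨?_, ?_, LinearMap.lTensor_surjective M hsurj⟩
  · -- injectivity of `lTensor M (d 0)`
    rcases lt_or_eq_of_le hm with h | h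
    · have h2 : 0 + 2 ≤ m := by omega
      have hB : Module.Flat R (LinearMap.range (d 1)) :=
        hrange_flat (m - 2) 1 (by omega)
      exact aux_purity (d 0) ((d 1).rangeRestrict) hinj
        (by rw [LinearMap.exact_iff, LinearMap.ker_rangeRestrict,
          (hexact 0 h2).linearMap_ker_eq])
        (LinearMap.surjective_rangeRestrict _)
    · -- m = 1 : `d 0` is bijective
      have hm1 : m = 1 := h.symm
      subst hm1
      have hs0 : Function.Surjective (d 0) := hsurj
      set e := LinearEquiv.ofBijective (d 0) ⟨hinj, hs0⟩ with he
      exact aux_lTensor_injective_of_comp_eq_id (d 0) e.symm.toLinearMap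
        (by ext x;
            simp only [LinearMap.comp_apply, LinearMap.id_apply, LinearEquiv.coe_coe];
            exact e.symm_apply_apply x)
  · -- middle exactness
    intro i hi
    have hcomp : d (i + 1) = (LinearMap.range (d (i + 1))).subtype ∘ₗ (d (i + 1)).rangeRestrict :=
      (LinearMap.subtype_comp_codRestrict _ _ _).symm
    have hex' : Function.Exact (LinearMap.lTensor M (d i))
        (LinearMap.lTensor M ((d (i + 1)).rangeRestrict)) :=
      aux_lTensor_exact (d i) ((d (i + 1)).rangeRestrict) M
        (by rw [LinearMap.exact_iff, LinearMap.ker_rangeRestrict,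
          (hexact i hi).linearMap_ker_eq])
        (LinearMap.surjective_rangeRestrict _)
    intro y
    constructor
    · intro hy
      have hy' : LinearMap.lTensor M ((d (i + 1)).rangeRestrict) y = 0 := by
        apply hsub_inj (i + 1) (by omega)
        rw [map_zero, ← LinearMap.comp_apply, ← LinearMap.lTensor_comp, ← hcomp, hy]
      exact (hex' y).mp hy'
    · intro hy
      have hy' : LinearMap.lTensor M ((d (i + 1)).rangeRestrict) y = 0 := (hex' y).mpr hy
      rw [hcomp, LinearMap.lTensor_comp, LinearMap.comp_apply, hy', map_zero]
end
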